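/- The bound in the Laplacian stability lemma is tight: for every ν ≥ 1 and every ε > 0, there exist weighted graphs W and W̃ on 4 vertices with ν(W,W̃) = ν such that λ_{↑2}(LAP(W̃)) ≥ (ν − ε)·λ_{↑2}(LAP(W)). Concretely, for the path graph on vertices 1,2,3,4 with W having edge weights x, 1, x and W̃ having weights x/ν, 1, x/ν, one has λ_{↑2}(LAP(W)) = 1/(1+x) and λ_{↑2}(LAP(W̃))/λ_{↑2}(LAP(W)) = ν(1+x)/(ν+x), which tends to ν as x → ∞. -/

import Mathlib

open Matrix Finset

/-- The normalized Laplacian `I - a⁻¹ A a⁻¹` where `a` is the diagonal matrix with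
`a_{ii} = sqrt (Σ_j A_{ij})`. -/
noncomputable def normLap {n : ℕ} (A : Matrix (Fin n) (Fin n) ℝ) : Matrix (Fin n) (Fin n) ℝ :=
  1 - Matrix.of fun i j => A i j / (Real.sqrt (∑ k, A i k) * Real.sqrt (∑ k, A j k))

/-- The second-smallest eigenvalue of the normalized Laplacian of `A`, characterized
variationally as the infimum of the Rayleigh quotient over nonzero vectors orthogonal to
the kernel vector `(sqrt (Σ_j A_{ij}))_i`. -/
noncomputable def lambdaUp2 {n : ℕ} (A : Matrix (Fin n) (Fin n) ℝ) : ℝ :=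
  sInf {r : ℝ | ∃ x : Fin n → ℝ, x ≠ 0 ∧ (∑ i, x i * Real.sqrt (∑ k, A i k)) = 0 ∧
    r = (∑ i, ∑ j, x i * normLap A i j * x j) / (∑ i, x i ^ 2)}

/-- The weighted path graph on 4 vertices with edge weights `x, 1, x`. -/
noncomputable def pathW (x : ℝ) : Matrix (Fin 4) (Fin 4) ℝ :=
  Matrix.of fun i j =>
    if (i = 0 ∧ j = 1) ∨ (i = 1 ∧ j = 0) then x
    else if (i = 1 ∧ j = 2) ∨ (i = 2 ∧ j = 1) then 1
    else if (i = 2 ∧ j = 3) ∨ (i = 3 ∧ j = 2) then x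
    else 0

/-- ratio with the convention that `0/0 = 1`. -/
noncomputable def ratio01 (a b : ℝ) : ℝ := if a = 0 ∧ b = 0 then 1 else a / b

/-- `ν(W, W̃)`: the product of the two maximal entrywise ratios. -/
noncomputable def nuOf {n : ℕ} [NeZero n] (W Wt : Matrix (Fin n) (Fin n) ℝ) : ℝ :=
  (Finset.univ.sup' ⟨(0, 0), Finset.mem_univ _⟩ fun p : Fin n × Fin n =>
      ratio01 (W p.1 p.2) (Wt p.1 p.2)) *
  (Finset.univ.sup' ⟨(0, 0), Finset.mem_univ _⟩ fun p : Fin n × Fin n =>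
      ratio01 (Wt p.1 p.2) (W p.1 p.2))

open Filter Topology

/-!
On the orthogonal complement of the kernel vector `(√x, √(1+x), √(1+x), √x)`, the Rayleigh
quotient of the normalized Laplacian of the path with weights `x, 1, x` is at least
`1 / (1 + x)`: splitting a test vector into its parts symmetric and antisymmetric under the
reflection `0 ↔ 3, 1 ↔ 2`, the orthogonality constraint turns `(1 + x) Q(v) - ‖v‖²` into a sum
of squares, and `(√(1+x), √x, -√x, -√(1+x))` attains the bound. Hence
`λ(W̃) / λ(W) = ν (1 + x) / (ν + x) → ν`, while the entrywise ratios of `W` and `W̃` are only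
`ν`, `1` and `1 / ν`, so `ν(W, W̃) = ν`.
-/

lemma sum_sq_le_of_orthogonal {u t : ℝ} (ht : t ^ 2 = 1 + u ^ 2) {a b c d : ℝ}
    (horth : u * (a + d) + t * (b + c) = 0) :
    a ^ 2 + b ^ 2 + c ^ 2 + d ^ 2 ≤
      t ^ 2 * (a ^ 2 + b ^ 2 + c ^ 2 + d ^ 2) - 2 * (u * t) * (a * b + c * d) - 2 * (b * c) := by
  have key : t ^ 2 * (a ^ 2 + b ^ 2 + c ^ 2 + d ^ 2) - 2 * (u * t) * (a * b + c * d) - 2 * (b * c)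
      - (a ^ 2 + b ^ 2 + c ^ 2 + d ^ 2)
      = (u * (a - d) - t * (b - c)) ^ 2 / 2 + (2 * u ^ 2 + 1) * (b + c) ^ 2 := by
    linear_combination (a ^ 2 + b ^ 2 + c ^ 2 + d ^ 2 - (b - c) ^ 2 / 2 + 3 * (b + c) ^ 2 / 2) * ht
      + ((u * (a + d) + t * (b + c) - 4 * t * (b + c)) / 2) * horth
  rw [← sub_nonneg, key]
  positivity

lemma rowSum_pathW (x : ℝ) : (fun i => ∑ k, pathW x i k) = ![x, 1 + x, 1 + x, x] := by
  ext i
  fin_cases i <;> simp [pathW, Fin.sum_univ_four, add_comm]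

lemma sum_mul_sqrt_rowSum_pathW (x : ℝ) (v : Fin 4 → ℝ) :
    ∑ i, v i * √(∑ k, pathW x i k) = √x * (v 0 + v 3) + √(1 + x) * (v 1 + v 2) := by
  simp only [Fin.sum_univ_four, congrFun (rowSum_pathW x), cons_val_zero, cons_val_one,
    Matrix.cons_val]
  ring

lemma quadForm_normLap_pathW {x : ℝ} (hx : 0 < x) (v : Fin 4 → ℝ) :
    (1 + x) * ∑ i, ∑ j, v i * normLap (pathW x) i j * v j =
      (1 + x) * ∑ i, v i ^ 2 - 2 * (√x * √(1 + x)) * (v 0 * v 1 + v 2 * v 3)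
        - 2 * (v 1 * v 2) := by
  have hu : √x ^ 2 = x := Real.sq_sqrt hx.le
  have ht : √(1 + x) ^ 2 = 1 + x := Real.sq_sqrt (by positivity)
  simp only [normLap, Fin.sum_univ_four, congrFun (rowSum_pathW x)]
  simp only [pathW, of_apply, Matrix.sub_apply, one_apply_eq, one_apply_ne, ne_eq, Fin.reduceEq,
    zero_ne_one, one_ne_zero, and_false, and_true, and_self, or_self, or_false, or_true,
    not_false_eq_true, reduceIte, cons_val_zero, cons_val_one, Matrix.cons_val, zero_div,
    sub_zero, zero_sub, sub_self, mul_one, mul_neg, neg_mul, mul_zero, zero_mul, add_zero,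
    zero_add, one_div, _root_.mul_inv_rev]
  field_simp
  linear_combination (2 * (v 0 * v 1 + v 2 * v 3) * √(1 + x)) * (√(1 + x) ^ 2 * hu + x * ht)
    + 2 * √x * (v 1 * v 2) * ht

lemma lambdaUp2_pathW {x : ℝ} (hx : 0 < x) : lambdaUp2 (pathW x) = 1 / (1 + x) := by
  have hQ := quadForm_normLap_pathW hx
  have h1x : 0 < 1 + x := by positivity
  have ht : √(1 + x) ^ 2 = 1 + x := Real.sq_sqrt h1x.le
  have hu : √x ^ 2 = x := Real.sq_sqrt hx.le
  have hut : √(1 + x) ^ 2 = 1 + √x ^ 2 := by rw [ht, hu]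
  set u := √x
  set t := √(1 + x)
  refine IsLeast.csInf_eq ⟨⟨![t, u, -u, -t], fun h => ?_, ?_, ?_⟩, ?_⟩
  · exact (Real.sqrt_pos.mpr h1x).ne' (congrFun h 0)
  · rw [sum_mul_sqrt_rowSum_pathW]
    simp
  · have hS : 0 < ∑ i, ![t, u, -u, -t] i ^ 2 := by
      simp only [Fin.sum_univ_four, cons_val_zero, cons_val_one, Matrix.cons_val, even_two,
        Even.neg_pow]
      positivity
    rw [div_eq_div_iff h1x.ne' hS.ne', one_mul, mul_comm, hQ]
    simp only [Fin.sum_univ_four, cons_val_zero, cons_val_one, Matrix.cons_val, even_two,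
      Even.neg_pow, mul_neg, neg_mul, neg_neg, sub_neg_eq_add]
    linear_combination (2 * t ^ 2 + 2 * u ^ 2) * hu + 2 * u ^ 2 * hut
  · rintro r ⟨v, hv0, horth, rfl⟩
    have hS : 0 < ∑ i, v i ^ 2 := by
      obtain ⟨i, hi⟩ := Function.ne_iff.mp hv0
      exact sum_pos' (fun j _ => sq_nonneg _) ⟨i, mem_univ i, pow_two_pos_of_ne_zero hi⟩
    rw [sum_mul_sqrt_rowSum_pathW] at horth
    rw [div_le_div_iff₀ h1x hS, one_mul, mul_comm, hQ, ← ht]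
    simpa [Fin.sum_univ_four] using sum_sq_le_of_orthogonal hut horth

lemma lambdaUp2_pathW_div_div_lambdaUp2_pathW {ν x : ℝ} (hν : 0 < ν) (hx : 0 < x) :
    lambdaUp2 (pathW (x / ν)) / lambdaUp2 (pathW x) = ν * (1 + x) / (ν + x) := by
  rw [lambdaUp2_pathW (div_pos hx hν), lambdaUp2_pathW hx]
  field_simp

lemma nuOf_eq_of_forall_le {n : ℕ} [NeZero n] {W Wt : Matrix (Fin n) (Fin n) ℝ}
    (i j k l : Fin n) (hij : ∀ a b, ratio01 (W a b) (Wt a b) ≤ ratio01 (W i j) (Wt i j))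
    (hkl : ∀ a b, ratio01 (Wt a b) (W a b) ≤ ratio01 (Wt k l) (W k l)) :
    nuOf W Wt = ratio01 (W i j) (Wt i j) * ratio01 (Wt k l) (W k l) := by
  unfold nuOf
  congr 1
  · exact le_antisymm (sup'_le _ _ fun p _ => hij p.1 p.2)
      (le_sup' (fun p : Fin n × Fin n => ratio01 (W p.1 p.2) (Wt p.1 p.2)) (mem_univ (i, j)))
  · exact le_antisymm (sup'_le _ _ fun p _ => hkl p.1 p.2)
      (le_sup' (fun p : Fin n × Fin n => ratio01 (Wt p.1 p.2) (W p.1 p.2)) (mem_univ (k, l)))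

lemma nuOf_pathW_div {ν x : ℝ} (hν : 1 ≤ ν) (hx : 0 < x) :
    nuOf (pathW x) (pathW (x / ν)) = ν := by
  have hν0 : 0 < ν := by linarith
  have hratio : x / (x / ν) = ν := by field_simp
  have hratio' : x / ν / x ≤ 1 := by
    rw [div_div_cancel_left' hx.ne']
    exact inv_le_one_of_one_le₀ hν
  rw [nuOf_eq_of_forall_le 0 1 1 2]
  · simp [pathW, ratio01, hx.ne', hratio]
  all_goals
    intro i j
    fin_cases i <;> fin_cases j <;> simp [pathW, ratio01, hx.ne', hν0.ne', hratio] <;> linarith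

lemma tendsto_mul_one_add_div_add_atTop (ν : ℝ) :
    Tendsto (fun x : ℝ => ν * (1 + x) / (ν + x)) atTop (𝓝 ν) := by
  have h : Tendsto (fun x : ℝ => ν - ν * (ν - 1) / (ν + x)) atTop (𝓝 (ν - 0)) :=
    tendsto_const_nhds.sub
      (tendsto_const_nhds.div_atTop (tendsto_atTop_add_const_left _ ν tendsto_id))
  rw [sub_zero] at h
  refine h.congr' ?_
  filter_upwards [eventually_gt_atTop (-ν)] with x hx
  have : ν + x ≠ 0 := by linarith
  field_simp
  ring

theorem laplacian_stability_tight :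
    (∀ ν : ℝ, 1 ≤ ν → ∀ ε : ℝ, 0 < ε → ∃ x : ℝ, 0 < x ∧
      nuOf (pathW x) (pathW (x / ν)) = ν ∧
      lambdaUp2 (pathW (x / ν)) ≥ (ν - ε) * lambdaUp2 (pathW x)) ∧
    (∀ ν : ℝ, 1 ≤ ν → ∀ x : ℝ, 0 < x →
      lambdaUp2 (pathW x) = 1 / (1 + x) ∧
      lambdaUp2 (pathW (x / ν)) / lambdaUp2 (pathW x) = ν * (1 + x) / (ν + x)) ∧
    (∀ ν : ℝ, 1 ≤ ν →
      Filter.Tendsto (fun x : ℝ => ν * (1 + x) / (ν + x)) Filter.atTop (nhds ν)) := by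
  refine ⟨fun ν hν ε hε => ?_,
    fun ν hν x hx => ⟨lambdaUp2_pathW hx, lambdaUp2_pathW_div_div_lambdaUp2_pathW (by linarith) hx⟩,
    fun ν _ => tendsto_mul_one_add_div_add_atTop ν⟩
  obtain ⟨x, hx, hclose⟩ := ((eventually_gt_atTop 0).and
    ((tendsto_mul_one_add_div_add_atTop ν).eventually
      (eventually_ge_nhds (by linarith : ν - ε < ν)))).exists
  refine ⟨x, hx, nuOf_pathW_div hν hx, ?_⟩
  have hpos : 0 < lambdaUp2 (pathW x) := by
    rw [lambdaUp2_pathW hx]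
    positivity
  rw [ge_iff_le, ← le_div_iff₀ hpos, lambdaUp2_pathW_div_div_lambdaUp2_pathW (by linarith) hx]
  exact hclose
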